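/- Let p, ν ∈ ℕ with ν ≥ 1. For every τ ∈ (−1,1), the p-th derivative of q_ν satisfies q_ν^{(p)}(τ) = (1/2)·P_ν^{(p)}(τ)·log((1+τ)/(1−τ)) + (1/2)·Σ_{i=1}^{p} binom(p,i)·(i−1)!·((−1)^{i−1}·(1+τ)^{−i} + (1−τ)^{−i})·P_ν^{(p−i)}(τ) − W_{ν−1}^{(p)}(τ). -/

import Mathlib

/-- The Legendre polynomial `P_ν` via the Rodrigues formula. -/
noncomputable def legendreP (ν : ℕ) (τ : ℝ) : ℝ :=
  ((-1 : ℝ) ^ ν / (2 ^ ν * Nat.factorial ν)) *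
    iteratedDeriv ν (fun t : ℝ => (1 - t ^ 2) ^ ν) τ

/-- The polynomial `W_{ν-1}` (with `W_{-1} = 0`): `legendreW ν` denotes `W_{ν-1}`. -/
noncomputable def legendreW (ν : ℕ) (τ : ℝ) : ℝ :=
  if ν = 0 then 0 else
    ∑ i ∈ Finset.range ((ν - 1) / 2 + 1),
      ((2 * (ν : ℝ) - 4 * (i : ℝ) - 1) / (((ν : ℝ) - (i : ℝ)) * (2 * (i : ℝ) + 1))) *
        legendreP (ν - 2 * i - 1) τ

/-- The Legendre function of the second kind `q_ν` on `(-1,1)`. -/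
noncomputable def legendreQ (ν : ℕ) (τ : ℝ) : ℝ :=
  (1 / 2) * legendreP ν τ * Real.log ((1 + τ) / (1 - τ)) - legendreW ν τ

/-!
Write `ℓ(τ) = log((1 + τ)/(1 - τ))`, so that `q_ν = ½ ℓ P_ν - W_{ν-1}`. The Leibniz rule gives
`(ℓ P_ν)^{(p)} = Σ_i binom(p,i) ℓ^{(i)} P_ν^{(p-i)}`; the `i = 0` term is the logarithmic one, and
for `i ≥ 1` near a point of `(-1,1)` we have `ℓ = log(1 + τ) - log(1 - τ)`, whose derivatives follow
from `log^{(n+1)}(x) = (-1)^n n! x^{-1-n}`.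
-/

open Finset
open scoped Nat ContDiff Topology

-- Valid at `x = 0` too: `Real.deriv_log'` holds everywhere, with the junk value `0⁻¹ = 0`.
theorem Real.iteratedDeriv_succ_log (n : ℕ) (x : ℝ) :
    iteratedDeriv (n + 1) Real.log x = (-1) ^ n * n ! * x ^ (-1 - n : ℤ) := by
  rw [iteratedDeriv_succ', Real.deriv_log', iteratedDeriv_eq_iterate, iter_deriv_inv]

theorem iteratedDeriv_succ_log_div_one_sub {τ : ℝ} (hτ : τ ∈ Set.Ioo (-1 : ℝ) 1) (n : ℕ) :
    iteratedDeriv (n + 1) (fun t => Real.log ((1 + t) / (1 - t))) τ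
      = n ! * ((-1) ^ n * (1 + τ) ^ (-1 - n : ℤ) + (1 - τ) ^ (-1 - n : ℤ)) := by
  obtain ⟨h₁, h₂⟩ := hτ
  have hsplit : (fun t => Real.log ((1 + t) / (1 - t)))
      =ᶠ[𝓝 τ] fun t => Real.log (1 + t) - Real.log (1 - t) := by
    filter_upwards [Ioo_mem_nhds h₁ h₂] with t ht
    exact Real.log_div (by linarith [ht.1]) (by linarith [ht.2])
  rw [hsplit.iteratedDeriv_eq,
    iteratedDeriv_fun_sub (f := fun t => Real.log (1 + t)) (g := fun t => Real.log (1 - t))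
      ((Real.contDiffAt_log.2 (by linarith)).comp τ (by fun_prop))
      ((Real.contDiffAt_log.2 (by linarith)).comp τ (by fun_prop)),
    iteratedDeriv_comp_const_add, iteratedDeriv_comp_const_sub]
  simp only [Real.iteratedDeriv_succ_log, smul_eq_mul]
  have hsign : (-1 : ℝ) ^ (n + 1) * (-1) ^ n = -1 := by
    rw [← pow_add]
    exact Odd.neg_one_pow ⟨n, by ring⟩
  linear_combination (-(n ! : ℝ) * (1 - τ) ^ (-1 - n : ℤ)) * hsign

theorem contDiff_legendreP (ν : ℕ) : ContDiff ℝ ∞ (legendreP ν) := by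
  unfold legendreP
  simp only [iteratedDeriv_eq_iterate]
  exact contDiff_const.mul (ContDiff.iterate_deriv ν (by fun_prop))

theorem contDiff_legendreW (ν : ℕ) : ContDiff ℝ ∞ (legendreW ν) := by
  unfold legendreW
  split_ifs
  · exact contDiff_const
  · exact ContDiff.sum fun i _ => contDiff_const.mul (contDiff_legendreP _)

theorem Finset.sum_range_succ_eq_add_sum_Icc {M : Type*} [AddCommMonoid M] (p : ℕ) (f : ℕ → M) :
    ∑ i ∈ range (p + 1), f i = f 0 + ∑ i ∈ Icc 1 p, f i := by
  rw [range_eq_Ico, Ico_add_one_right_eq_Icc, ← insert_Icc_add_one_left_eq_Icc (Nat.zero_le p),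
    sum_insert (by simp), zero_add]

theorem stmt_12_general (p ν : ℕ) (τ : ℝ) (hτ : τ ∈ Set.Ioo (-1 : ℝ) 1) :
    iteratedDeriv p (legendreQ ν) τ
      = (1 / 2) * iteratedDeriv p (legendreP ν) τ * Real.log ((1 + τ) / (1 - τ))
        + (1 / 2) * ∑ i ∈ Finset.Icc 1 p,
            (Nat.choose p i : ℝ) * (Nat.factorial (i - 1) : ℝ) *
              ((-1 : ℝ) ^ (i - 1) * (1 + τ) ^ (-(i : ℤ)) + (1 - τ) ^ (-(i : ℤ))) *
              iteratedDeriv (p - i) (legendreP ν) τ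
        - iteratedDeriv p (legendreW ν) τ := by
  set ℓ : ℝ → ℝ := fun t => Real.log ((1 + t) / (1 - t))
  have hℓ : ContDiffAt ℝ p ℓ τ := by
    obtain ⟨h₁, h₂⟩ := hτ
    have : 0 < (1 + τ) / (1 - τ) := div_pos (by linarith) (by linarith)
    fun_prop (disch := first | positivity | linarith)
  have hP : ContDiffAt ℝ p (legendreP ν) τ :=
    (contDiff_legendreP ν).contDiffAt.of_le (by exact_mod_cast le_top)
  have hW : ContDiffAt ℝ p (legendreW ν) τ :=
    (contDiff_legendreW ν).contDiffAt.of_le (by exact_mod_cast le_top)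
  have hQ : legendreQ ν = fun t => 1 / 2 * (ℓ t * legendreP ν t) - legendreW ν t := by
    funext t
    simp only [legendreQ, ℓ]
    ring
  rw [hQ, iteratedDeriv_fun_sub (contDiffAt_const.mul (hℓ.mul hP)) hW,
    iteratedDeriv_const_mul_field, iteratedDeriv_fun_mul hℓ hP, sum_range_succ_eq_add_sum_Icc]
  have hterm : ∀ i ∈ Icc 1 p,
      (p.choose i : ℝ) * iteratedDeriv i ℓ τ * iteratedDeriv (p - i) (legendreP ν) τ
        = (p.choose i : ℝ) * ((i - 1)! : ℝ) *
            ((-1 : ℝ) ^ (i - 1) * (1 + τ) ^ (-(i : ℤ)) + (1 - τ) ^ (-(i : ℤ))) *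
            iteratedDeriv (p - i) (legendreP ν) τ := by
    intro i hi
    obtain ⟨n, rfl⟩ := Nat.exists_eq_add_of_le' (mem_Icc.1 hi).1
    rw [iteratedDeriv_succ_log_div_one_sub hτ, Nat.add_sub_cancel,
      show -((n + 1 : ℕ) : ℤ) = -1 - n by push_cast; ring]
    ring
  rw [sum_congr rfl hterm]
  simp only [Nat.choose_zero_right, Nat.cast_one, iteratedDeriv_zero, Nat.sub_zero, ℓ]
  ring

/-- Leibniz formula for the `p`-th derivative of `q_ν` on `(-1,1)`. -/
theorem stmt_12 (p ν : ℕ) (hν : 1 ≤ ν) (τ : ℝ) (hτ : τ ∈ Set.Ioo (-1 : ℝ) 1) :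
    iteratedDeriv p (legendreQ ν) τ
      = (1 / 2) * iteratedDeriv p (legendreP ν) τ * Real.log ((1 + τ) / (1 - τ))
        + (1 / 2) * ∑ i ∈ Finset.Icc 1 p,
            (Nat.choose p i : ℝ) * (Nat.factorial (i - 1) : ℝ) *
              ((-1 : ℝ) ^ (i - 1) * (1 + τ) ^ (-(i : ℤ)) + (1 - τ) ^ (-(i : ℤ))) *
              iteratedDeriv (p - i) (legendreP ν) τ
        - iteratedDeriv p (legendreW ν) τ :=
  stmt_12_general p ν τ hτ
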